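/- Fix constants y₄,y₆,y₈,y₁₀ ∈ ℂ. Let G₂,G₄,G₅,G₇ : ℝ → ℂ be functions such that for every τ ∈ ℝ: G₂'(τ) = G₂(τ)G₅(τ) − G₇(τ); G₄'(τ) = 2(G₂(τ)G₇(τ) − G₄(τ)G₅(τ)); G₅'(τ) = G₅(τ)² + 14G₂(τ)⁵ − 28G₂(τ)³G₄(τ) − 18G₂(τ)G₄(τ)² − 8y₄G₂(τ)G₄(τ) + 2y₆(G₂(τ)² + G₄(τ)) − 2y₈G₂(τ) + y₁₀; G₇'(τ) = −G₅(τ)G₇(τ) + 21G₂(τ)⁶ + 35G₂(τ)⁴G₄(τ) − 21G₂(τ)²G₄(τ)² − 3G₄(τ)³ + 2y₄(5G₂(τ)⁴ − G₄(τ)²) − 2y₆(3G₂(τ)³ − G₂(τ)G₄(τ)) + y₈(3G₂(τ)² − G₄(τ)) − y₁₀G₂(τ) (each equation meaning the function has the indicated derivative at τ). Then the functions τ ↦ I₁₂(G₂(τ),G₄(τ),G₅(τ),G₇(τ)) and τ ↦ I₁₄(G₂(τ),G₄(τ),G₅(τ),G₇(τ)) have derivative 0 at every τ ∈ ℝ.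 -/

import Mathlib

/-!
Both integrals are polynomial, so by the chain rule their derivative along a curve is the
gradient paired with the velocity. Along a solution of the system the velocity is the vector
field itself, and the gradients of `I₁₂` and `I₁₄` are orthogonal to that field identically,
as a polynomial identity in `G₂, G₄, G₅, G₇, y₄, …, y₁₀`.
-/

def I12 (y4 y6 y8 y10 g2 g4 g5 g7 : ℂ) : ℂ :=
  2 * g5 * g7 - 7 * g2 ^ 6 - 35 * g2 ^ 4 * g4 - 21 * g2 ^ 2 * g4 ^ 2 - g4 ^ 3
    - y4 * (5 * g2 ^ 4 + 10 * g2 ^ 2 * g4 + g4 ^ 2) + 4 * y6 * (g2 ^ 3 + g2 * g4)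
    - y8 * (3 * g2 ^ 2 + g4) + 2 * y10 * g2

def I14 (y4 y6 y8 y10 g2 g4 g5 g7 : ℂ) : ℂ :=
  -g7 ^ 2 - g4 * g5 ^ 2 + 2 * g2 * g5 * g7 - 6 * g2 ^ 7 - 14 * g2 ^ 5 * g4
    + 14 * g2 ^ 3 * g4 ^ 2 + 6 * g2 * g4 ^ 3 - 4 * y4 * (g2 ^ 5 - g2 * g4 ^ 2)
    + y6 * (3 * g2 ^ 4 - 2 * g2 ^ 2 * g4 - g4 ^ 2) - 2 * y8 * (g2 ^ 3 - g2 * g4)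
    + y10 * (g2 ^ 2 - g4)

section ChainRule

variable {y4 y6 y8 y10 : ℂ} {g2 g4 g5 g7 : ℝ → ℂ} {d2 d4 d5 d7 : ℂ} {τ : ℝ}

theorem hasDerivAt_I12 (h2 : HasDerivAt g2 d2 τ) (h4 : HasDerivAt g4 d4 τ)
    (h5 : HasDerivAt g5 d5 τ) (h7 : HasDerivAt g7 d7 τ) :
    HasDerivAt (fun s => I12 y4 y6 y8 y10 (g2 s) (g4 s) (g5 s) (g7 s))
      ((-42 * g2 τ ^ 5 - 140 * g2 τ ^ 3 * g4 τ - 42 * g2 τ * g4 τ ^ 2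
          - 20 * y4 * (g2 τ ^ 3 + g2 τ * g4 τ) + 4 * y6 * (3 * g2 τ ^ 2 + g4 τ)
          - 6 * y8 * g2 τ + 2 * y10) * d2
        + (-35 * g2 τ ^ 4 - 42 * g2 τ ^ 2 * g4 τ - 3 * g4 τ ^ 2
          - 2 * y4 * (5 * g2 τ ^ 2 + g4 τ) + 4 * y6 * g2 τ - y8) * d4
        + 2 * g7 τ * d5 + 2 * g5 τ * d7) τ := by
  have h := (((((((((h5.const_mul 2).mul h7).sub ((h2.pow 6).const_mul 7)).sub
    (((h2.pow 4).const_mul 35).mul h4)).sub (((h2.pow 2).const_mul 21).mul (h4.pow 2))).sub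
    (h4.pow 3)).sub (((((h2.pow 4).const_mul 5).add (((h2.pow 2).const_mul 10).mul h4)).add
    (h4.pow 2)).const_mul y4)).add (((h2.pow 3).add (h2.mul h4)).const_mul (4 * y6))).sub
    ((((h2.pow 2).const_mul 3).add h4).const_mul y8)).add (h2.const_mul (2 * y10))
  exact h.congr_deriv (by norm_num; ring)

theorem hasDerivAt_I14 (h2 : HasDerivAt g2 d2 τ) (h4 : HasDerivAt g4 d4 τ)
    (h5 : HasDerivAt g5 d5 τ) (h7 : HasDerivAt g7 d7 τ) :
    HasDerivAt (fun s => I14 y4 y6 y8 y10 (g2 s) (g4 s) (g5 s) (g7 s))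
      ((2 * g5 τ * g7 τ - 42 * g2 τ ^ 6 - 70 * g2 τ ^ 4 * g4 τ + 42 * g2 τ ^ 2 * g4 τ ^ 2
          + 6 * g4 τ ^ 3 - 4 * y4 * (5 * g2 τ ^ 4 - g4 τ ^ 2)
          + y6 * (12 * g2 τ ^ 3 - 4 * g2 τ * g4 τ) - 2 * y8 * (3 * g2 τ ^ 2 - g4 τ)
          + 2 * y10 * g2 τ) * d2
        + (-g5 τ ^ 2 - 14 * g2 τ ^ 5 + 28 * g2 τ ^ 3 * g4 τ + 18 * g2 τ * g4 τ ^ 2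
          + 8 * y4 * g2 τ * g4 τ - 2 * y6 * (g2 τ ^ 2 + g4 τ) + 2 * y8 * g2 τ - y10) * d4
        + 2 * (g2 τ * g7 τ - g4 τ * g5 τ) * d5 + 2 * (g2 τ * g5 τ - g7 τ) * d7) τ := by
  have h := ((((((((((h7.pow 2).neg.sub (h4.mul (h5.pow 2))).add
    (((h2.const_mul 2).mul h5).mul h7)).sub ((h2.pow 7).const_mul 6)).sub
    (((h2.pow 5).const_mul 14).mul h4)).add (((h2.pow 3).const_mul 14).mul (h4.pow 2))).add
    ((h2.const_mul 6).mul (h4.pow 3))).sub (((h2.pow 5).sub (h2.mul (h4.pow 2))).const_mul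
    (4 * y4))).add (((((h2.pow 4).const_mul 3).sub (((h2.pow 2).const_mul 2).mul h4)).sub
    (h4.pow 2)).const_mul y6)).sub (((h2.pow 3).sub (h2.mul h4)).const_mul (2 * y8))).add
    (((h2.pow 2).sub h4).const_mul y10)
  exact h.congr_deriv (by norm_num; ring)

end ChainRule

/-- Along any solution of the dynamical system (II), the functions
`τ ↦ I₁₂(G₂,G₄,G₅,G₇)` and `τ ↦ I₁₄(G₂,G₄,G₅,G₇)` have derivative `0` everywhere. -/
theorem statement12 (y4 y6 y8 y10 : ℂ) (G2 G4 G5 G7 : ℝ → ℂ)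
    (h2 : ∀ τ : ℝ, HasDerivAt G2 (G2 τ * G5 τ - G7 τ) τ)
    (h4 : ∀ τ : ℝ, HasDerivAt G4 (2 * (G2 τ * G7 τ - G4 τ * G5 τ)) τ)
    (h5 : ∀ τ : ℝ, HasDerivAt G5
      ((G5 τ) ^ 2 + 14 * (G2 τ) ^ 5 - 28 * (G2 τ) ^ 3 * G4 τ - 18 * G2 τ * (G4 τ) ^ 2
        - 8 * y4 * G2 τ * G4 τ + 2 * y6 * ((G2 τ) ^ 2 + G4 τ)
        - 2 * y8 * G2 τ + y10) τ)
    (h7 : ∀ τ : ℝ, HasDerivAt G7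
      (-(G5 τ) * G7 τ + 21 * (G2 τ) ^ 6 + 35 * (G2 τ) ^ 4 * G4 τ
        - 21 * (G2 τ) ^ 2 * (G4 τ) ^ 2 - 3 * (G4 τ) ^ 3
        + 2 * y4 * (5 * (G2 τ) ^ 4 - (G4 τ) ^ 2)
        - 2 * y6 * (3 * (G2 τ) ^ 3 - G2 τ * G4 τ)
        + y8 * (3 * (G2 τ) ^ 2 - G4 τ) - y10 * G2 τ) τ) :
    ∀ τ : ℝ,
      HasDerivAt (fun s => I12 y4 y6 y8 y10 (G2 s) (G4 s) (G5 s) (G7 s)) 0 τ ∧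
      HasDerivAt (fun s => I14 y4 y6 y8 y10 (G2 s) (G4 s) (G5 s) (G7 s)) 0 τ := by
  intro τ
  exact ⟨(hasDerivAt_I12 (h2 τ) (h4 τ) (h5 τ) (h7 τ)).congr_deriv (by ring),
    (hasDerivAt_I14 (h2 τ) (h4 τ) (h5 τ) (h7 τ)).congr_deriv (by ring)⟩
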